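/- (Gangl–Kaneko–Zagier sum formula for even arguments) For every even integer k ≥ 4 one has Σ ζ(r, s) = (3/4) · ζ(k), where the sum runs over all pairs of even integers r, s ≥ 2 with r + s = k, ζ(r,s) = Σ_{m > n > 0} 1/(m^r n^s), and ζ(k) = Σ_{n≥1} n^{−k}. -/

import Mathlib

/-!
Write `k = 2J + 2`. For fixed `m > n`, the terms `1 / (m ^ (2j + 2) n ^ (2J - 2j))`, `j < J`, form a
geometric progression whose sum is `(n ^ (-2J) - m ^ (-2J)) / (m² - n²)`. The two resulting double
series are summed by partial fractions `2n / (m² - n²) = 1 / (m - n) - 1 / (m + n)`: summing over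
`m > n` gives `H_{2n} / (2n)`, summing over `n < m` gives `(H_{m-1} + H_{2m-1} - H_m) / (2m)`.
Their difference against the weights `n ^ (-2J)` resp. `m ^ (-2J)` is, term by term,
`(1 / (2n) + 1 / n) / (2n) · n ^ (-2J) = (3/4) n ^ (-k)`.
-/

/-- The double zeta value `ζ(r,s) = Σ_{m > n > 0} 1/(m^r n^s)`. -/
noncomputable def dzeta (r s : ℕ) : ℝ :=
  ∑' p : {q : ℕ × ℕ // q.2 < q.1 ∧ 0 < q.2},
    (1 : ℝ) / ((p.1.1 : ℝ) ^ r * (p.1.2 : ℝ) ^ s)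

/-- The Riemann zeta value `ζ(k) = Σ_{n≥1} n^{−k}`. -/
noncomputable def rzeta (k : ℕ) : ℝ :=
  ∑' n : ℕ, (1 : ℝ) / ((n : ℝ) + 1) ^ k

open Finset Filter Topology

theorem Antitone.hasSum_sub_add_nat {f : ℕ → ℝ} (hf : Antitone f)
    (hf0 : Tendsto f atTop (𝓝 0)) (K : ℕ) :
    HasSum (fun d => f d - f (d + K)) (∑ i ∈ range K, f i) := by
  induction K with
  | zero => simp
  | succ K ih =>
    have hstep : HasSum (fun d => f (d + K) - f (d + 1 + K)) (f K) := by
      have hg0 : Tendsto (fun N => f (N + K)) atTop (𝓝 0) :=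
        hf0.comp (tendsto_add_atTop_nat K)
      rw [hasSum_iff_tendsto_nat_of_nonneg (fun d => sub_nonneg.2 (hf (by omega)))]
      simpa [sum_range_sub' (fun d => f (d + K))] using
        (tendsto_const_nhds (x := f K)).sub hg0
    convert ih.add hstep using 1
    · ext d
      rw [add_right_comm d 1 K, add_assoc d K 1]
      ring
    · exact sum_range_succ f K

theorem harmonic_eq_sum_range_one_div (n : ℕ) :
    (harmonic n : ℝ) = ∑ i ∈ range n, 1 / ((i : ℝ) + 1) := by
  simp [harmonic]

theorem hasSum_one_div_add_sq_sub_sq {n : ℕ} (hn : 0 < n) :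
    HasSum (fun d : ℕ => 1 / (((n : ℝ) + d + 1) ^ 2 - (n : ℝ) ^ 2))
      ((harmonic (2 * n) : ℝ) / (2 * n)) := by
  have hanti : Antitone fun d : ℕ => 1 / ((d : ℝ) + 1) := fun a b hab => by
    dsimp only
    gcongr
  have h := (hanti.hasSum_sub_add_nat tendsto_one_div_add_atTop_nhds_zero_nat (2 * n)).div_const
    (2 * n)
  have hn' : (0 : ℝ) < n := by exact_mod_cast hn
  have hpartial : (fun d : ℕ => 1 / (((n : ℝ) + d + 1) ^ 2 - (n : ℝ) ^ 2)) =
      fun d : ℕ => (1 / ((d : ℝ) + 1) - 1 / (((d + 2 * n : ℕ) : ℝ) + 1)) / (2 * (n : ℝ)) := by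
    ext d
    rw [show ((n : ℝ) + d + 1) ^ 2 - n ^ 2 = ((d : ℝ) + 1) * (d + 2 * n + 1) by ring]
    push_cast
    field_simp
    ring
  rw [hpartial, harmonic_eq_sum_range_one_div]
  exact h

theorem sum_range_one_div_sq_sub_sq (m : ℕ) :
    ∑ i ∈ range m, 1 / (((m : ℝ) + 1) ^ 2 - ((i : ℝ) + 1) ^ 2) =
      ((harmonic m : ℝ) + harmonic (2 * m + 1) - harmonic (m + 1)) / (2 * ((m : ℝ) + 1)) := by
  have hpartial : ∀ i ∈ range m, 1 / (((m : ℝ) + 1) ^ 2 - ((i : ℝ) + 1) ^ 2) =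
      (1 / (((m - 1 - i : ℕ) : ℝ) + 1) + 1 / (((m + 1 + i : ℕ) : ℝ) + 1)) /
        (2 * ((m : ℝ) + 1)) := by
    intro i hi
    have hi : i < m := mem_range.1 hi
    have hi' : (i : ℝ) + 1 ≤ m := by exact_mod_cast hi
    rw [Nat.cast_sub (by omega), Nat.cast_sub (by omega),
      show ((m : ℝ) + 1) ^ 2 - ((i : ℝ) + 1) ^ 2 = (m - i) * (m + i + 2) by ring]
    have : (m : ℝ) - i ≠ 0 := (sub_pos.2 (by linarith)).ne'
    push_cast
    rw [show (m : ℝ) - 1 - i + 1 = m - i by ring]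
    field_simp
    ring
  have hreflect := sum_range_reflect (fun j => 1 / ((j : ℝ) + 1)) m
  have hshift := sum_range_add (fun j => 1 / ((j : ℝ) + 1)) (m + 1) m
  simp only [harmonic_eq_sum_range_one_div] at *
  rw [sum_congr rfl hpartial, ← sum_div, sum_add_distrib, hreflect,
    show 2 * m + 1 = m + 1 + m by ring, hshift]
  ring

theorem sum_range_one_div_pow_mul_pow {K : Type*} [Field K] {x y : K} (hx : x ≠ 0) (hy : y ≠ 0)
    (hxy : x ^ 2 - y ^ 2 ≠ 0) (J : ℕ) :
    ∑ j ∈ range J, 1 / (x ^ (2 * j + 2) * y ^ (2 * (J - j))) =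
      (1 / y ^ (2 * J) - 1 / x ^ (2 * J)) / (x ^ 2 - y ^ 2) := by
  have hgeom := geom_sum₂_mul (x ^ 2)⁻¹ (y ^ 2)⁻¹ J
  have hterm : ∀ j ∈ range J, 1 / (x ^ (2 * j + 2) * y ^ (2 * (J - j))) =
      (x ^ 2)⁻¹ * (y ^ 2)⁻¹ * ((x ^ 2)⁻¹ ^ j * (y ^ 2)⁻¹ ^ (J - 1 - j)) := by
    intro j hj
    rw [show 2 * (J - j) = 2 * (J - 1 - j) + 2 by have := mem_range.1 hj; omega]
    simp only [pow_add, pow_mul, inv_pow]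
    field_simp
  rw [sum_congr rfl hterm, ← mul_sum, eq_div_iff hxy]
  set S := ∑ j ∈ range J, (x ^ 2)⁻¹ ^ j * (y ^ 2)⁻¹ ^ (J - 1 - j)
  calc (x ^ 2)⁻¹ * (y ^ 2)⁻¹ * S * (x ^ 2 - y ^ 2) = -(S * ((x ^ 2)⁻¹ - (y ^ 2)⁻¹)) := by
        field_simp
        ring
    _ = 1 / y ^ (2 * J) - 1 / x ^ (2 * J) := by
        rw [hgeom, pow_mul, pow_mul]
        ring

abbrev DoubleZetaIndex : Type := {q : ℕ × ℕ // q.2 < q.1 ∧ 0 < q.2}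

namespace DoubleZetaIndex

def equivProd : ℕ × ℕ ≃ DoubleZetaIndex where
  toFun p := ⟨(p.1 + p.2 + 2, p.1 + 1), by omega⟩
  invFun q := (q.1.2 - 1, q.1.1 - q.1.2 - 1)
  left_inv p := Prod.ext rfl (by dsimp only; omega)
  right_inv := by
    rintro ⟨⟨m, n⟩, hnm, hn⟩
    ext <;> dsimp only <;> omega

def equivSigma : (Σ m : ℕ, Fin m) ≃ DoubleZetaIndex where
  toFun p := ⟨(p.1 + 1, p.2 + 1), by omega⟩
  invFun q := ⟨q.1.1 - 1, q.1.2 - 1, by omega⟩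
  left_inv _ := rfl
  right_inv := by
    rintro ⟨⟨m, n⟩, hnm, hn⟩
    ext <;> dsimp only <;> omega

theorem summable_of_le {f : DoubleZetaIndex → ℝ} (hf : ∀ q, 0 ≤ f q)
    (hle : ∀ t d : ℕ, f (equivProd (t, d)) ≤ 1 / (((t : ℝ) + 1) ^ 2 * ((d : ℝ) + 1) ^ 2)) :
    Summable f := by
  have hsq : Summable fun n : ℕ => 1 / ((n : ℝ) + 1) ^ 2 := by
    simpa using (summable_nat_add_iff 1).mpr (Real.summable_one_div_nat_pow.mpr one_lt_two)
  have hprod := hsq.mul_of_nonneg hsq (fun _ => by positivity) (fun _ => by positivity)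
  rw [← equivProd.summable_iff]
  refine hprod.of_nonneg_of_le (fun _ => hf _) fun ⟨t, d⟩ => ?_
  simpa only [Function.comp_apply, one_div_mul_one_div] using hle t d

variable (c : ℕ)

noncomputable def lowerTerm (q : DoubleZetaIndex) : ℝ :=
  1 / ((q.1.2 : ℝ) ^ c * ((q.1.1 : ℝ) ^ 2 - (q.1.2 : ℝ) ^ 2))

noncomputable def upperTerm (q : DoubleZetaIndex) : ℝ :=
  1 / ((q.1.1 : ℝ) ^ c * ((q.1.1 : ℝ) ^ 2 - (q.1.2 : ℝ) ^ 2))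

theorem sq_sub_sq_pos (q : DoubleZetaIndex) : (0 : ℝ) < (q.1.1 : ℝ) ^ 2 - (q.1.2 : ℝ) ^ 2 := by
  obtain ⟨⟨m, n⟩, hnm, -⟩ := q
  have : (n : ℝ) < m := by exact_mod_cast hnm
  dsimp only
  nlinarith [(n.cast_nonneg : (0 : ℝ) ≤ n)]

theorem upperTerm_nonneg (q : DoubleZetaIndex) : 0 ≤ upperTerm c q := by
  have := sq_sub_sq_pos q
  unfold upperTerm
  positivity

theorem upperTerm_le_lowerTerm (q : DoubleZetaIndex) : upperTerm c q ≤ lowerTerm c q := by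
  have hnm : (q.1.2 : ℝ) ≤ q.1.1 := by exact_mod_cast q.2.1.le
  have hn : (0 : ℝ) < q.1.2 := by exact_mod_cast q.2.2
  have := sq_sub_sq_pos q
  unfold upperTerm lowerTerm
  gcongr

variable {c}

theorem summable_lowerTerm (hc : 2 ≤ c) : Summable (lowerTerm c) := by
  refine summable_of_le (fun q => (upperTerm_nonneg c q).trans (upperTerm_le_lowerTerm c q))
    fun t d => ?_
  simp only [lowerTerm, equivProd, Equiv.coe_fn_mk]
  push_cast
  gcongr
  · exact le_add_of_nonneg_left t.cast_nonneg
  · nlinarith [mul_nonneg (t.cast_nonneg : (0 : ℝ) ≤ t) (d.cast_nonneg : (0 : ℝ) ≤ d)]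

theorem summable_upperTerm (hc : 2 ≤ c) : Summable (upperTerm c) :=
  (summable_lowerTerm hc).of_nonneg_of_le (upperTerm_nonneg c) (upperTerm_le_lowerTerm c)

theorem summable_dzeta_summand {r s : ℕ} (hr : 2 ≤ r) (hs : 2 ≤ s) :
    Summable fun q : DoubleZetaIndex => 1 / ((q.1.1 : ℝ) ^ r * (q.1.2 : ℝ) ^ s) := by
  refine summable_of_le (fun q => by positivity) fun t d => ?_
  simp only [equivProd, Equiv.coe_fn_mk]
  push_cast
  rw [mul_comm]
  gcongr
  · exact le_add_of_nonneg_left t.cast_nonneg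
  · have ht : (0 : ℝ) ≤ t := t.cast_nonneg
    calc ((d : ℝ) + 1) ^ 2 ≤ ((t : ℝ) + d + 2) ^ 2 :=
          pow_le_pow_left₀ (by positivity) (by linarith) 2
      _ ≤ ((t : ℝ) + d + 2) ^ r := pow_le_pow_right₀ (by linarith) hr

theorem hasSum_lowerTerm (hc : 2 ≤ c) :
    HasSum (fun N : ℕ => 1 / ((N : ℝ) + 1) ^ c *
        ((harmonic (2 * (N + 1)) : ℝ) / (2 * ((N : ℝ) + 1))))
      (∑' q, lowerTerm c q) := by
  refine (equivProd.hasSum_iff.mpr (summable_lowerTerm hc).hasSum).prod_fiberwise fun t => ?_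
  have h := (hasSum_one_div_add_sq_sub_sq t.succ_pos).mul_left (1 / ((t + 1 : ℕ) : ℝ) ^ c)
  push_cast at h
  refine h.congr_fun fun d => ?_
  simp only [Function.comp_apply, lowerTerm, equivProd, Equiv.coe_fn_mk]
  push_cast
  rw [one_div_mul_one_div]
  ring_nf

theorem hasSum_upperTerm (hc : 2 ≤ c) :
    HasSum (fun N : ℕ => 1 / ((N : ℝ) + 1) ^ c *
        (((harmonic N : ℝ) + harmonic (2 * N + 1) - harmonic (N + 1)) / (2 * ((N : ℝ) + 1))))
      (∑' q, upperTerm c q) := by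
  refine (equivSigma.hasSum_iff.mpr (summable_upperTerm hc).hasSum).sigma fun m => ?_
  rw [← sum_range_one_div_sq_sub_sq, mul_sum, ← Fin.sum_univ_eq_sum_range fun i =>
    1 / ((m : ℝ) + 1) ^ c * (1 / (((m : ℝ) + 1) ^ 2 - ((i : ℝ) + 1) ^ 2))]
  refine (hasSum_fintype _).congr_fun fun i => ?_
  simp only [Function.comp_apply, upperTerm, equivSigma, Equiv.coe_fn_mk]
  push_cast
  rw [one_div_mul_one_div]

theorem tsum_lowerTerm_sub_tsum_upperTerm (hc : 2 ≤ c) :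
    ∑' q, lowerTerm c q - ∑' q, upperTerm c q = 3 / 4 * rzeta (c + 2) := by
  rw [← ((hasSum_lowerTerm hc).sub (hasSum_upperTerm hc)).tsum_eq, rzeta, ← tsum_mul_left]
  congr 1
  ext N
  have h1 : (harmonic (2 * (N + 1)) : ℝ) = harmonic (2 * N + 1) + 1 / (2 * ((N : ℝ) + 1)) := by
    rw [show 2 * (N + 1) = 2 * N + 1 + 1 by ring, harmonic_succ]
    push_cast
    ring
  have h2 : (harmonic (N + 1) : ℝ) = harmonic N + 1 / ((N : ℝ) + 1) := by
    rw [harmonic_succ]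
    push_cast
    ring
  rw [h1, h2]
  field_simp
  ring

end DoubleZetaIndex

open DoubleZetaIndex

theorem sum_range_dzeta_eq_tsum_lowerTerm_sub_tsum_upperTerm {J : ℕ} (hJ : 1 ≤ J) :
    ∑ j ∈ range J, dzeta (2 * j + 2) (2 * (J - j)) =
      ∑' q, lowerTerm (2 * J) q - ∑' q, upperTerm (2 * J) q := by
  rw [← (summable_lowerTerm (by omega)).tsum_sub (summable_upperTerm (by omega))]
  simp only [dzeta]
  rw [← Summable.tsum_finsetSum fun j hj => summable_dzeta_summand (by omega)
    (by have := mem_range.1 hj; omega)]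
  refine tsum_congr fun q => ?_
  have hm : (q.1.1 : ℝ) ≠ 0 := Nat.cast_ne_zero.2 (by have := q.2; omega)
  have hn : (q.1.2 : ℝ) ≠ 0 := Nat.cast_ne_zero.2 (by have := q.2; omega)
  rw [sum_range_one_div_pow_mul_pow hm hn (sq_sub_sq_pos q).ne', lowerTerm, upperTerm, sub_div,
    div_div, div_div]

theorem sum_filter_even_add_eq {M : Type*} [AddCommMonoid M] (J : ℕ) (g : ℕ → ℕ → M) :
    ∑ p ∈ (range (2 * J + 2 + 1) ×ˢ range (2 * J + 2 + 1)).filter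
        (fun p => p.1 + p.2 = 2 * J + 2 ∧ 2 ≤ p.1 ∧ 2 ≤ p.2 ∧ p.1 % 2 = 0 ∧ p.2 % 2 = 0),
      g p.1 p.2 = ∑ j ∈ range J, g (2 * j + 2) (2 * (J - j)) := by
  refine sum_nbij' (fun p => p.1 / 2 - 1) (fun j => (2 * j + 2, 2 * (J - j))) ?_ ?_ ?_ ?_ ?_ <;>
    simp only [mem_filter, mem_product, mem_range, Prod.forall, Prod.mk.injEq]
  · omega
  · omega
  · omega
  · omega
  · intro a b _
    congr 1 <;> omega

/-- Gangl–Kaneko–Zagier: for every even `k ≥ 4`,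
`Σ_{r+s=k, r,s ≥ 2 even} ζ(r,s) = (3/4) ζ(k)`. -/
theorem even_double_zeta_sum (k : ℕ) (hk : 4 ≤ k) (hke : k % 2 = 0) :
    ∑ p ∈ (Finset.range (k + 1) ×ˢ Finset.range (k + 1)).filter
        (fun p => p.1 + p.2 = k ∧ 2 ≤ p.1 ∧ 2 ≤ p.2 ∧ p.1 % 2 = 0 ∧ p.2 % 2 = 0),
      dzeta p.1 p.2 = 3 / 4 * rzeta k := by
  obtain ⟨J, rfl⟩ : ∃ J, k = 2 * J + 2 := ⟨k / 2 - 1, by omega⟩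
  rw [sum_filter_even_add_eq, sum_range_dzeta_eq_tsum_lowerTerm_sub_tsum_upperTerm (by omega),
    tsum_lowerTerm_sub_tsum_upperTerm (by omega)]
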